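/- Let Ω ⊂ ℝⁿ be a bounded Lipschitz domain with barycenter at the origin (∫_Ω x dx = 0), let u₀ ∈ H¹(Ω; ℝⁿ), let R₀ ∈ SO(n) minimize R ↦ ∫_Ω π(Rx) dx over SO(n), where π is C¹ on a neighborhood of the closure of ∪_{R∈SO(n)} RΩ. Define E₀(u, R₀) = (1/2)∫_Ω Q(x, e(u)(x)) dx + ∫_{∂Ω} π(R₀x) n_{∂Ω}(x) · u(x) dH^{n−1}(x), where Q(x,·) is any quadratic form and e(u) the symmetric gradient. Then for every skew-symmetric A, E₀(u₀ + Ax, R₀) = E₀(u₀, R₀). -/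

import Mathlib

open MeasureTheory

/-- The special orthogonal group `SO(n)` as a set of matrices. -/
def SOn (n : ℕ) : Set (Matrix (Fin n) (Fin n) ℝ) :=
  {R | R.transpose * R = 1 ∧ R.det = 1}

/-- The union `𝓞 = ⋃_{R ∈ SO(n)} R Ω` of all rotated copies of `Ω`. -/
def bigO (n : ℕ) (Ω : Set (Fin n → ℝ)) : Set (Fin n → ℝ) :=
  ⋃ R ∈ SOn n, (fun x => R.mulVec x) '' Ω

/-- The symmetric gradient `e(u) = (∇u + ∇uᵀ)/2` of a map `u : ℝⁿ → ℝⁿ`. -/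
noncomputable def symGrad {n : ℕ} (u : (Fin n → ℝ) → (Fin n → ℝ)) (x : Fin n → ℝ) :
    Matrix (Fin n) (Fin n) ℝ :=
  Matrix.of fun i j =>
    (fderiv ℝ u x (Pi.single j 1) i + fderiv ℝ u x (Pi.single i 1) j) / 2


/-!
The bulk term does not change because `x ↦ A x` has vanishing symmetric gradient. For the
boundary term, `t ↦ ∫_Ω π(R₀ e^{tA} x) dx` is minimal at `t = 0` because `R₀ e^{tA} ∈ SO(n)`, so
its derivative `∫_Ω ∇π(R₀ x) · R₀ A x dx` vanishes. As `tr A = 0`, this integrand is the divergence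
of `x ↦ π(R₀ x) A x`, whose flux `∫_{∂Ω} π(R₀ x) ν · A x dσ` therefore vanishes by Gauss–Green.
-/

open scoped Matrix
open NormedSpace (exp)

attribute [local instance] Matrix.linftyOpNormedRing Matrix.linftyOpNormedAlgebra

section Rotations

variable {n : ℕ}

lemma SOn.mul_mem {R S : Matrix (Fin n) (Fin n) ℝ} (hR : R ∈ SOn n) (hS : S ∈ SOn n) :
    R * S ∈ SOn n := by
  refine ⟨?_, by rw [Matrix.det_mul, hR.2, hS.2, mul_one]⟩
  rw [Matrix.transpose_mul, mul_assoc, ← mul_assoc Rᵀ, hR.1, one_mul, hS.1]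

lemma exp_smul_mem_SOn {A : Matrix (Fin n) (Fin n) ℝ} (hA : Aᵀ = -A) (t : ℝ) :
    exp (t • A) ∈ SOn n := by
  have horth : (exp (t • A))ᵀ * exp (t • A) = 1 := by
    rw [← Matrix.exp_transpose, Matrix.transpose_smul, hA, smul_neg,
      ← Matrix.exp_add_of_commute _ _ (Commute.refl (t • A)).neg_left, neg_add_cancel,
      NormedSpace.exp_zero]
  refine ⟨horth, ?_⟩
  have hdet_sq : (exp (t • A)).det ^ 2 = 1 := by
    simpa [Matrix.det_mul, Matrix.det_transpose, sq] using congrArg Matrix.det horth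
  -- `exp (t • A)` is the square of `exp ((t / 2) • A)`, so its determinant is nonnegative.
  have hdet_nonneg : 0 ≤ (exp (t • A)).det := by
    rw [← add_halves t, add_smul, Matrix.exp_add_of_commute _ _ (Commute.refl _), Matrix.det_mul]
    exact mul_self_nonneg _
  exact (pow_eq_one_iff_of_nonneg hdet_nonneg two_ne_zero).1 hdet_sq

lemma SOn.mulVec_mem_closure_bigO {Ω : Set (Fin n → ℝ)} {R : Matrix (Fin n) (Fin n) ℝ}
    (hR : R ∈ SOn n) {x : Fin n → ℝ} (hx : x ∈ closure Ω) :
    R *ᵥ x ∈ closure (bigO n Ω) := by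
  refine closure_mono ?_
    (image_closure_subset_closure_image (continuous_const.matrix_mulVec continuous_id) ⟨x, hx, rfl⟩)
  exact Set.subset_biUnion_of_mem (u := fun R => (fun x => R *ᵥ x) '' Ω) hR

end Rotations

lemma symGrad_add_mulVec_of_transpose_eq_neg {n : ℕ} (u : (Fin n → ℝ) → (Fin n → ℝ))
    {A : Matrix (Fin n) (Fin n) ℝ} (hA : Aᵀ = -A) (x : Fin n → ℝ) :
    symGrad (fun z => u z + A *ᵥ z) x = symGrad u x := by
  have hA' : HasFDerivAt (A *ᵥ ·) A.mulVecLin.toContinuousLinearMap x :=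
    A.mulVecLin.toContinuousLinearMap.hasFDerivAt
  by_cases hu : DifferentiableAt ℝ u x
  · ext i j
    have hij : A j i = -A i j := by simpa using congrFun (congrFun hA i) j
    have hd : fderiv ℝ (fun z => u z + A *ᵥ z) x =
        fderiv ℝ u x + A.mulVecLin.toContinuousLinearMap :=
      (hu.hasFDerivAt.add hA').fderiv
    simp only [symGrad, Matrix.of_apply, hd, add_apply, Pi.add_apply,
      LinearMap.coe_toContinuousLinearMap', Matrix.mulVecLin_apply, Matrix.mulVec_single_one,
      Matrix.col_apply, hij]
    ring
  · have hu' : ¬ DifferentiableAt ℝ (fun z => u z + A *ᵥ z) x :=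
      (hA'.differentiableAt.add_iff_left (f := u)).not.2 hu
    simp only [symGrad, fderiv_zero_of_not_differentiableAt hu,
      fderiv_zero_of_not_differentiableAt hu']

theorem hasDerivAt_setIntegral_of_continuousOn_compact {X : Type*} [TopologicalSpace X]
    [T2Space X] [MeasurableSpace X] [OpensMeasurableSpace X]
    {μ : Measure X} [IsFiniteMeasureOnCompacts μ]
    {K s : Set X} (hK : IsCompact K) (hsK : s ⊆ K) (hs : MeasurableSet s)
    {F F' : ℝ → X → ℝ} (hF : ∀ t, ContinuousOn (F t) K)
    (hF' : ContinuousOn (Function.uncurry F') (Set.univ ×ˢ K))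
    (hderiv : ∀ t, ∀ x ∈ s, HasDerivAt (F · x) (F' t x) t) (t₀ : ℝ) :
    HasDerivAt (fun t => ∫ x in s, F t x ∂μ) (∫ x in s, F' t₀ x ∂μ) t₀ := by
  obtain ⟨C, hC⟩ := ((isCompact_closedBall t₀ 1).prod hK).exists_bound_of_continuousOn
    (hF'.mono (Set.prod_mono (Set.subset_univ _) subset_rfl))
  have hF'₀ : ContinuousOn (F' t₀) K :=
    hF'.comp (continuousOn_const.prodMk continuousOn_id) fun x hx => ⟨trivial, hx⟩
  refine (hasDerivAt_integral_of_dominated_loc_of_deriv_le (bound := fun _ => C)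
    (Metric.ball_mem_nhds t₀ one_pos) ?_ ?_ ?_ ?_ ?_ ?_).2
  · exact Filter.Eventually.of_forall fun t => ((hF t).mono hsK).aestronglyMeasurable hs
  · exact ((hF t₀).integrableOn_compact hK).mono_set hsK
  · exact (hF'₀.mono hsK).aestronglyMeasurable hs
  · exact (ae_restrict_iff' hs).2 (Filter.Eventually.of_forall fun x hx t ht =>
      hC (t, x) ⟨Metric.ball_subset_closedBall ht, hsK hx⟩)
  · exact integrableOn_const ((measure_mono hsK).trans_lt hK.measure_lt_top).ne
  · exact (ae_restrict_iff' hs).2 (Filter.Eventually.of_forall fun x hx t _ => hderiv t x hx)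

theorem integral_fderiv_mulVec_eq_zero_of_forall_le {n : ℕ} {Ω : Set (Fin n → ℝ)}
    (hΩm : MeasurableSet Ω) (hΩb : Bornology.IsBounded Ω) {π : (Fin n → ℝ) → ℝ}
    {U : Set (Fin n → ℝ)} (hU : IsOpen U) (hOU : closure (bigO n Ω) ⊆ U)
    (hπ : ContDiffOn ℝ 1 π U) {R₀ : Matrix (Fin n) (Fin n) ℝ} (hR₀ : R₀ ∈ SOn n)
    (hmin : ∀ S ∈ SOn n, (∫ x in Ω, π (R₀ *ᵥ x)) ≤ ∫ x in Ω, π (S *ᵥ x))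
    {A : Matrix (Fin n) (Fin n) ℝ} (hA : Aᵀ = -A) :
    ∫ x in Ω, fderiv ℝ π (R₀ *ᵥ x) (R₀ *ᵥ (A *ᵥ x)) = 0 := by
  set S : ℝ → Matrix (Fin n) (Fin n) ℝ := fun t => R₀ * exp (t • A)
  have hS : ∀ t, S t ∈ SOn n := fun t => SOn.mul_mem hR₀ (exp_smul_mem_SOn hA t)
  have hSU : ∀ t, ∀ x ∈ closure Ω, S t *ᵥ x ∈ U := fun t x hx =>
    hOU (SOn.mulVec_mem_closure_bigO (hS t) hx)
  have hS_cont : Continuous S :=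
    continuous_const.mul (NormedSpace.exp_continuous.comp (continuous_id.smul continuous_const))
  have hderiv : ∀ t, ∀ x ∈ Ω, HasDerivAt (fun s => π (S s *ᵥ x))
      (fderiv ℝ π (S t *ᵥ x) (S t *ᵥ (A *ᵥ x))) t := by
    intro t x hx
    have hpath : HasDerivAt (fun s => S s *ᵥ x) ((R₀ * (exp (t • A) * A)) *ᵥ x) t := by
      have h := ((Matrix.mulVecBilin ℝ ℝ).flip x).toContinuousLinearMap.hasFDerivAt.comp_hasDerivAt
        t ((hasDerivAt_exp_smul_const A t).const_mul R₀)
      exact h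
    rw [← mul_assoc, ← Matrix.mulVec_mulVec] at hpath
    exact ((hπ.differentiableOn one_ne_zero).differentiableAt
      (hU.mem_nhds (hSU t x (subset_closure hx)))).hasFDerivAt.comp_hasDerivAt t hpath
  have hF : ∀ t, ContinuousOn (fun x => π (S t *ᵥ x)) (closure Ω) := fun t =>
    hπ.continuousOn.comp (continuous_const.matrix_mulVec continuous_id).continuousOn (hSU t)
  have hF' : ContinuousOn (Function.uncurry fun t x =>
      fderiv ℝ π (S t *ᵥ x) (S t *ᵥ (A *ᵥ x))) (Set.univ ×ˢ closure Ω) :=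
    ((hπ.continuousOn_fderiv_of_isOpen hU le_rfl).comp
      (hS_cont.fst'.matrix_mulVec continuous_snd).continuousOn
      fun p hp => hSU p.1 p.2 hp.2).clm_apply
      (hS_cont.fst'.matrix_mulVec (continuous_const.matrix_mulVec continuous_snd)).continuousOn
  have hD := hasDerivAt_setIntegral_of_continuousOn_compact (μ := volume)
    hΩb.isCompact_closure subset_closure hΩm hF hF' hderiv 0
  have hlocmin : IsLocalMin (fun t => ∫ x in Ω, π (S t *ᵥ x)) 0 :=
    Filter.Eventually.of_forall fun t => by simpa [S] using hmin (S t) (hS t)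
  simpa [S] using hlocmin.hasDerivAt_eq_zero hD

section Divergence

variable {n : ℕ}

noncomputable def divergence (f : (Fin n → ℝ) → (Fin n → ℝ)) (x : Fin n → ℝ) : ℝ :=
  ∑ i, fderiv ℝ f x (Pi.single i 1) i

lemma divergence_id (x : Fin n → ℝ) : divergence (fun y => y) x = n := by
  simp [divergence]

lemma divergence_add {f g : (Fin n → ℝ) → (Fin n → ℝ)} {x : Fin n → ℝ}
    (hf : DifferentiableAt ℝ f x) (hg : DifferentiableAt ℝ g x) :
    divergence (fun y => f y + g y) x = divergence f x + divergence g x := by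
  have hd : fderiv ℝ (fun y => f y + g y) x = fderiv ℝ f x + fderiv ℝ g x :=
    (hf.hasFDerivAt.add hg.hasFDerivAt).fderiv
  simp only [divergence, hd, add_apply, Pi.add_apply, Finset.sum_add_distrib]

lemma ContinuousLinearMap.sum_apply_single_mul (ℓ : (Fin n → ℝ) →L[ℝ] ℝ) (v : Fin n → ℝ) :
    ∑ i, ℓ (Pi.single i 1) * v i = ℓ v := by
  conv_rhs => rw [← Finset.univ_sum_single v, map_sum]
  refine Finset.sum_congr rfl fun i _ => ?_
  rw [mul_comm, ← smul_eq_mul, ← map_smul, ← Pi.single_smul, smul_eq_mul, mul_one]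

lemma divergence_smul_mulVec {φ : (Fin n → ℝ) → ℝ} {x : Fin n → ℝ}
    (hφ : DifferentiableAt ℝ φ x) (A : Matrix (Fin n) (Fin n) ℝ) :
    divergence (fun y => φ y • A *ᵥ y) x = fderiv ℝ φ x (A *ᵥ x) + φ x * A.trace := by
  have hd : fderiv ℝ (fun y => φ y • A *ᵥ y) x =
      φ x • A.mulVecLin.toContinuousLinearMap + (fderiv ℝ φ x).smulRight (A *ᵥ x) :=
    (hφ.hasFDerivAt.smul A.mulVecLin.toContinuousLinearMap.hasFDerivAt).fderiv
  simp only [divergence, hd, add_apply, smul_apply,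
    ContinuousLinearMap.smulRight_apply, Pi.add_apply, Pi.smul_apply, smul_eq_mul,
    LinearMap.coe_toContinuousLinearMap', Matrix.mulVecLin_apply, Matrix.mulVec_single_one,
    Matrix.col_apply, Finset.sum_add_distrib, ← Finset.mul_sum, Matrix.trace, Matrix.diag]
  rw [(fderiv ℝ φ x).sum_apply_single_mul, add_comm]

end Divergence

lemma integral_add_eq_left_of_integral_eq_zero {α E : Type*} [MeasurableSpace α]
    [NormedAddCommGroup E] [NormedSpace ℝ E] {μ : Measure α} {f g : α → E}
    (hg : Integrable g μ) (hg₀ : ∫ x, g x ∂μ = 0) :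
    ∫ x, f x + g x ∂μ = ∫ x, f x ∂μ := by
  by_cases hf : Integrable f μ
  · rw [integral_add hf hg, hg₀, add_zero]
  · rw [integral_undef hf, integral_undef ((integrable_add_iff_integrable_left' hg).not.2 hf)]

section GaussGreen

variable {n : ℕ} {Ω : Set (Fin n → ℝ)} {σ : Measure (Fin n → ℝ)} {ν : (Fin n → ℝ) → (Fin n → ℝ)}

theorem integrable_flux (hΩo : IsOpen Ω) (hΩb : Bornology.IsBounded Ω)
    (hGG : ∀ (V : Set (Fin n → ℝ)) (f : (Fin n → ℝ) → (Fin n → ℝ)),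
      IsOpen V → closure Ω ⊆ V → ContDiffOn ℝ 1 f V →
      (∫ x in Ω, divergence f x) = ∫ x in frontier Ω, (∑ i, ν x i * f x i) ∂σ)
    {V : Set (Fin n → ℝ)} (hV : IsOpen V) (hΩV : closure Ω ⊆ V)
    {f : (Fin n → ℝ) → (Fin n → ℝ)} (hf : ContDiffOn ℝ 1 f V)
    (hdiv : IntegrableOn (divergence f) Ω) :
    Integrable (fun x => ∑ i, ν x i * f x i) (σ.restrict (frontier Ω)) := by
  rcases Nat.eq_zero_or_pos n with rfl | hn
  · simp
  rcases Ω.eq_empty_or_nonempty with rfl | hΩne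
  · simp
  have hvol : 0 < volume.real Ω * n :=
    mul_pos (ENNReal.toReal_pos (hΩo.measure_pos volume hΩne).ne' hΩb.measure_lt_top.ne)
      (Nat.cast_pos.2 hn)
  -- A flux integral with nonzero value is integrable, as non-integrable functions integrate to
  -- `0`. If `∫_Ω div f = 0`, write `f = (f + id) - id`: both fluxes on the right equal `n |Ω| ≠ 0`.
  have integrable_of_ne_zero : ∀ g, ContDiffOn ℝ 1 g V → ∫ x in Ω, divergence g x ≠ 0 →
      Integrable (fun x => ∑ i, ν x i * g x i) (σ.restrict (frontier Ω)) := fun g hg hg₀ =>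
    Integrable.of_integral_ne_zero (by rwa [← hGG V g hV hΩV hg])
  have hdiv_id : ∫ x in Ω, divergence (fun y => y) x = volume.real Ω * n := by
    simp [divergence_id, mul_comm]
  by_cases hf₀ : ∫ x in Ω, divergence f x = 0
  · have hdiv_add : ∫ x in Ω, divergence (fun y => f y + y) x = volume.real Ω * n := by
      rw [setIntegral_congr_fun hΩo.measurableSet fun x hx => (divergence_add
        ((hf.differentiableOn one_ne_zero).differentiableAt (hV.mem_nhds (hΩV (subset_closure hx))))
        differentiableAt_fun_id).trans (congrArg _ (divergence_id x)),
        integral_add hdiv (integrableOn_const hΩb.measure_lt_top.ne), hf₀, zero_add,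
        setIntegral_const, smul_eq_mul]
    have hadd := integrable_of_ne_zero _ (hf.add contDiffOn_fun_id) (hdiv_add ▸ hvol.ne')
    have hid := integrable_of_ne_zero _ contDiffOn_fun_id (hdiv_id ▸ hvol.ne')
    refine (hadd.sub hid).congr (Filter.Eventually.of_forall fun x => ?_)
    simp only [Pi.sub_apply, Pi.add_apply, mul_add, Finset.sum_add_distrib, add_sub_cancel_right]
  · exact integrable_of_ne_zero f hf hf₀

end GaussGreen

theorem integrable_flux_smul_mulVec_and_integral_eq_zero {n : ℕ} {Ω : Set (Fin n → ℝ)}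
    (hΩo : IsOpen Ω) (hΩb : Bornology.IsBounded Ω)
    {σ : Measure (Fin n → ℝ)} {ν : (Fin n → ℝ) → (Fin n → ℝ)}
    (hGG : ∀ (V : Set (Fin n → ℝ)) (f : (Fin n → ℝ) → (Fin n → ℝ)),
      IsOpen V → closure Ω ⊆ V → ContDiffOn ℝ 1 f V →
      (∫ x in Ω, divergence f x) = ∫ x in frontier Ω, (∑ i, ν x i * f x i) ∂σ)
    {π : (Fin n → ℝ) → ℝ} {U : Set (Fin n → ℝ)} (hU : IsOpen U)
    (hOU : closure (bigO n Ω) ⊆ U) (hπ : ContDiffOn ℝ 1 π U)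
    {R₀ : Matrix (Fin n) (Fin n) ℝ} (hR₀ : R₀ ∈ SOn n)
    (hmin : ∀ S ∈ SOn n, (∫ x in Ω, π (R₀ *ᵥ x)) ≤ ∫ x in Ω, π (S *ᵥ x))
    {A : Matrix (Fin n) (Fin n) ℝ} (hA : Aᵀ = -A) :
    Integrable (fun x => ∑ i, ν x i * (π (R₀ *ᵥ x) • A *ᵥ x) i) (σ.restrict (frontier Ω)) ∧
      ∫ x in frontier Ω, ∑ i, ν x i * (π (R₀ *ᵥ x) • A *ᵥ x) i ∂σ = 0 := by
  set V := (R₀ *ᵥ ·) ⁻¹' U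
  have hR₀_cont : Continuous (R₀ *ᵥ ·) := continuous_const.matrix_mulVec continuous_id
  have hV : IsOpen V := hU.preimage hR₀_cont
  have hΩV : closure Ω ⊆ V := fun x hx => hOU (SOn.mulVec_mem_closure_bigO hR₀ hx)
  have hf : ContDiffOn ℝ 1 (fun x => π (R₀ *ᵥ x) • A *ᵥ x) V :=
    (hπ.comp R₀.mulVecLin.toContinuousLinearMap.contDiff.contDiffOn fun _ hx => hx).smul
      A.mulVecLin.toContinuousLinearMap.contDiff.contDiffOn
  have htrace : A.trace = 0 := by
    have h := congrArg Matrix.trace hA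
    rw [Matrix.trace_transpose, Matrix.trace_neg] at h
    linarith
  have hdiv : ∀ x ∈ V, divergence (fun x => π (R₀ *ᵥ x) • A *ᵥ x) x =
      fderiv ℝ π (R₀ *ᵥ x) (R₀ *ᵥ (A *ᵥ x)) := by
    intro x hx
    have hφ : HasFDerivAt (fun y => π (R₀ *ᵥ y))
        ((fderiv ℝ π (R₀ *ᵥ x)).comp R₀.mulVecLin.toContinuousLinearMap) x :=
      ((hπ.differentiableOn one_ne_zero).differentiableAt (hU.mem_nhds hx)).hasFDerivAt.comp x
        R₀.mulVecLin.toContinuousLinearMap.hasFDerivAt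
    rw [divergence_smul_mulVec hφ.differentiableAt, hφ.fderiv, htrace, mul_zero, add_zero]
    rfl
  have hdiv_int : IntegrableOn (divergence fun x => π (R₀ *ᵥ x) • A *ᵥ x) Ω := by
    have hcont : ContinuousOn (fun x => fderiv ℝ π (R₀ *ᵥ x) (R₀ *ᵥ (A *ᵥ x))) (closure Ω) :=
      ((hπ.continuousOn_fderiv_of_isOpen hU le_rfl).comp hR₀_cont.continuousOn hΩV).clm_apply
        (continuous_const.matrix_mulVec (continuous_const.matrix_mulVec continuous_id)).continuousOn
    refine ((hcont.integrableOn_compact hΩb.isCompact_closure).mono_set subset_closure).congr_fun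
      (fun x hx => (hdiv x (hΩV (subset_closure hx))).symm) hΩo.measurableSet
  refine ⟨integrable_flux hΩo hΩb hGG hV hΩV hf hdiv_int, (hGG V _ hV hΩV hf).symm.trans ?_⟩
  rw [setIntegral_congr_fun hΩo.measurableSet fun x hx => hdiv x (hΩV (subset_closure hx))]
  exact integral_fderiv_mulVec_eq_zero_of_forall_le hΩo.measurableSet hΩb hU hOU hπ hR₀ hmin hA

theorem stmt_13_general (n : ℕ) (Ω : Set (Fin n → ℝ)) (hΩo : IsOpen Ω)
    (hΩb : Bornology.IsBounded Ω)
    (σ : Measure (Fin n → ℝ)) (ν : (Fin n → ℝ) → (Fin n → ℝ))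
    -- `σ` is the surface measure on `∂Ω` and `ν` the outward unit normal, encoded
    -- through the Gauss–Green (divergence) theorem for `C¹` vector fields:
    (hGG : ∀ (V : Set (Fin n → ℝ)) (f : (Fin n → ℝ) → (Fin n → ℝ)),
      IsOpen V → closure Ω ⊆ V → ContDiffOn ℝ 1 f V →
      (∫ x in Ω, ∑ i, fderiv ℝ f x (Pi.single i 1) i) =
        ∫ x in frontier Ω, (∑ i, ν x i * f x i) ∂σ)
    (π : (Fin n → ℝ) → ℝ) (U : Set (Fin n → ℝ)) (hU : IsOpen U)
    (hOU : closure (bigO n Ω) ⊆ U) (hπ : ContDiffOn ℝ 1 π U)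
    (R₀ : Matrix (Fin n) (Fin n) ℝ) (hR₀ : R₀ ∈ SOn n)
    (hmin : ∀ S ∈ SOn n, (∫ x in Ω, π (R₀.mulVec x)) ≤ ∫ x in Ω, π (S.mulVec x))
    (Q : (Fin n → ℝ) → Matrix (Fin n) (Fin n) ℝ → ℝ)
    (u₀ : (Fin n → ℝ) → (Fin n → ℝ)) :
    ∀ A : Matrix (Fin n) (Fin n) ℝ, A.transpose = -A →
      ((1 : ℝ) / 2) * (∫ x in Ω, Q x (symGrad (fun z => u₀ z + A.mulVec z) x)) +
        (∫ x in frontier Ω,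
          π (R₀.mulVec x) * (∑ i, ν x i * (u₀ x + A.mulVec x) i) ∂σ) =
      ((1 : ℝ) / 2) * (∫ x in Ω, Q x (symGrad u₀ x)) +
        (∫ x in frontier Ω, π (R₀.mulVec x) * (∑ i, ν x i * u₀ x i) ∂σ) := by
  intro A hA
  simp only [symGrad_add_mulVec_of_transpose_eq_neg u₀ hA]
  congr 1
  obtain ⟨hflux_int, hflux⟩ :=
    integrable_flux_smul_mulVec_and_integral_eq_zero hΩo hΩb hGG hU hOU hπ hR₀ hmin hA
  refine Eq.trans ?_ (integral_add_eq_left_of_integral_eq_zero hflux_int hflux)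
  refine integral_congr_ae (Filter.Eventually.of_forall fun x => ?_)
  simp only [Pi.add_apply, Pi.smul_apply, smul_eq_mul, Finset.mul_sum, ← Finset.sum_add_distrib]
  exact Finset.sum_congr rfl fun i _ => by ring

theorem stmt_13 (n : ℕ) (Ω : Set (Fin n → ℝ)) (hΩo : IsOpen Ω)
    (hΩb : Bornology.IsBounded Ω)
    (hbary : (∫ x in Ω, x : Fin n → ℝ) = 0)
    (σ : Measure (Fin n → ℝ)) (ν : (Fin n → ℝ) → (Fin n → ℝ))
    -- `σ` is the surface measure on `∂Ω` and `ν` the outward unit normal, encoded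
    -- through the Gauss–Green (divergence) theorem for `C¹` vector fields:
    (hGG : ∀ (V : Set (Fin n → ℝ)) (f : (Fin n → ℝ) → (Fin n → ℝ)),
      IsOpen V → closure Ω ⊆ V → ContDiffOn ℝ 1 f V →
      (∫ x in Ω, ∑ i, fderiv ℝ f x (Pi.single i 1) i) =
        ∫ x in frontier Ω, (∑ i, ν x i * f x i) ∂σ)
    (π : (Fin n → ℝ) → ℝ) (U : Set (Fin n → ℝ)) (hU : IsOpen U)
    (hOU : closure (bigO n Ω) ⊆ U) (hπ : ContDiffOn ℝ 1 π U)
    (R₀ : Matrix (Fin n) (Fin n) ℝ) (hR₀ : R₀ ∈ SOn n)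
    (hmin : ∀ S ∈ SOn n, (∫ x in Ω, π (R₀.mulVec x)) ≤ ∫ x in Ω, π (S.mulVec x))
    (Q : (Fin n → ℝ) → Matrix (Fin n) (Fin n) ℝ → ℝ)
    (u₀ : (Fin n → ℝ) → (Fin n → ℝ)) (hu₀ : Differentiable ℝ u₀) :
    ∀ A : Matrix (Fin n) (Fin n) ℝ, A.transpose = -A →
      ((1 : ℝ) / 2) * (∫ x in Ω, Q x (symGrad (fun z => u₀ z + A.mulVec z) x)) +
        (∫ x in frontier Ω,
          π (R₀.mulVec x) * (∑ i, ν x i * (u₀ x + A.mulVec x) i) ∂σ) =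
      ((1 : ℝ) / 2) * (∫ x in Ω, Q x (symGrad u₀ x)) +
        (∫ x in frontier Ω, π (R₀.mulVec x) * (∑ i, ν x i * u₀ x i) ∂σ) :=
  stmt_13_general n Ω hΩo hΩb σ ν hGG π U hU hOU hπ R₀ hR₀ hmin Q u₀
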